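/- Suppose \(\kappa \in \Gamma_k\) with \(\kappa_1 \ge \cdots \ge \kappa_n\) and \(\kappa_n \le -\theta \kappa_1\) for some \(\theta \in (0,1]\) with \(\kappa_1 > 0\). Let \(F^{ii} = \sigma_{k-1}(\kappa|i)\). Then \(\sum_{i=1}^n F^{ii} \kappa_i^2 \ge F^{nn} \kappa_n^2 \ge \frac{\theta^2}{n} \kappa_1^2 \sum_{i=1}^n F^{ii}\). -/

import Mathlib

open Finset

/-- The `k`-th elementary symmetric polynomial of `κ` restricted to indices in `s`. -/
noncomputable def esymmOn {n : ℕ} (s : Finset (Fin n)) (κ : Fin n → ℝ) (k : ℕ) : ℝ :=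
  ∑ S ∈ s.powersetCard k, ∏ i ∈ S, κ i

/-- The `k`-th elementary symmetric polynomial of `κ : Fin n → ℝ`. -/
noncomputable def esymm {n : ℕ} (κ : Fin n → ℝ) (k : ℕ) : ℝ :=
  esymmOn Finset.univ κ k

/-!
Everything rests on two facts about Gårding's cone `Γ_k`. Deleting an entry maps `Γ_k` into
`Γ_{k-1}`, so every `F^{ii}` is positive; and `F^{ii} - F^{jj} = (κ_j - κ_i) σ_{k-2}(κ|ij)` with
`κ|ij ∈ Γ_{k-2}`, so `F^{nn}` is the largest. Then `∑ F^{ii} ≤ n F^{nn}` and `κ_n² ≥ θ² κ_1²`.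

For the first fact write `g_{s,k}` for the `(|s| - k)`-th derivative of `∏ (X + s_i)`. Its
coefficients are positive multiples of `σ_0(s), …, σ_k(s)` and it is real-rooted (Rolle), so
`s ∈ Γ_k` as soon as all its roots are negative. Moreover
`g_{a::t,k} = (X + a) g_{t,k-1} + (|t| + 1 - k) g_{t,k}` and `g_{t,k}' = g_{t,k-1}`. If `g_{t,k-1}`
had a largest root `r ≥ 0`, positivity of `g_{a::t,k}` at `r` would give `g_{t,k}(r) > 0`, while
`g_{t,k-1}'(r) ≥ 0`. This contradicts Newton's inequality `f f'' < f'²` for the real-rooted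
`f = g_{t,k}` at `r`, where `f' = g_{t,k-1}` vanishes.
-/

open Polynomial

namespace Multiset

variable {R : Type*} [CommSemiring R]

theorem esymm_zero (s : Multiset R) : s.esymm 0 = 1 := by
  simp [esymm]

theorem esymm_cons_succ (a : R) (s : Multiset R) (m : ℕ) :
    (a ::ₘ s).esymm (m + 1) = s.esymm (m + 1) + a * s.esymm m := by
  simp only [esymm, powersetCard_cons, map_add, sum_add, map_map, Function.comp_def, prod_cons,
    sum_map_mul_left]

theorem esymm_pos [PartialOrder R] [IsStrictOrderedRing R] {s : Multiset R}
    (hs : ∀ a ∈ s, 0 < a) {m : ℕ} (hm : m ≤ card s) : 0 < s.esymm m := by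
  have hne : powersetCard m s ≠ 0 := by
    rw [← card_pos, card_powersetCard]
    exact Nat.choose_pos hm
  simpa [esymm] using sum_lt_sum_of_nonempty (f := fun _ => (0 : R)) hne fun t ht =>
    prod_pos fun a ha => hs a (mem_of_le (mem_powersetCard.mp ht).1 ha)

theorem splits_prod_X_add_C (s : Multiset R) : (s.map fun a => X + C a).prod.Splits :=
  Splits.multisetProd fun f hf => by
    obtain ⟨a, -, rfl⟩ := mem_map.mp hf
    exact Splits.X_add_C a

theorem natDegree_prod_X_add_C [Nontrivial R] (s : Multiset R) :
    (s.map fun a => X + C a).prod.natDegree = card s := by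
  rw [natDegree_multiset_prod_of_monic _ (forall_mem_map_iff.2 fun a _ => monic_X_add_C a),
    map_map]
  simp

end Multiset

namespace Polynomial

theorem splits_derivative {f : ℝ[X]} (hf : f.Splits) : (derivative f).Splits := by
  rw [splits_iff_card_roots] at hf ⊢
  have := f.card_roots_le_derivative
  have := (derivative f).card_roots'
  have := f.natDegree_derivative_le
  omega

theorem splits_iterate_derivative {f : ℝ[X]} (hf : f.Splits) (d : ℕ) :
    (derivative^[d] f).Splits := by
  induction d with
  | zero => exact hf
  | succ d ih => rw [Function.iterate_succ_apply']; exact splits_derivative ih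

theorem iterate_derivative_X_add_C_mul {R : Type*} [CommSemiring R] (a : R) (q : R[X]) (d : ℕ) :
    derivative^[d] ((X + C a) * q) = (X + C a) * derivative^[d] q + d • derivative^[d - 1] q := by
  rw [add_mul, iterate_map_add, mul_comm X, iterate_derivative_mul_X,
    iterate_derivative_C_mul]
  ring

theorem sq_eval_derivative_sub_mul_X_sub_C_mul {R : Type*} [CommRing R] (a r : R) (h : R[X]) :
    eval r (derivative ((X - C a) * h)) ^ 2 -
        eval r ((X - C a) * h) * eval r (derivative (derivative ((X - C a) * h))) =
      eval r h ^ 2 + (r - a) ^ 2 *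
        (eval r (derivative h) ^ 2 - eval r h * eval r (derivative (derivative h))) := by
  simp only [derivative_mul, derivative_add, derivative_sub, derivative_X, derivative_C,
    derivative_one, derivative_zero, eval_add, eval_mul, eval_sub, eval_X, eval_C, eval_one,
    eval_zero]
  ring

section OrderedField

variable {K : Type*} [Field K] [LinearOrder K] [IsStrictOrderedRing K]

theorem eval_pos_of_coeff_nonneg {f : K[X]} (hf : ∀ j, 0 ≤ f.coeff j) (h0 : 0 < f.coeff 0)
    {x : K} (hx : 0 ≤ x) : 0 < f.eval x := by
  rw [eval_eq_sum_range]
  calc 0 < f.coeff 0 * x ^ 0 := by simpa using h0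
    _ ≤ _ := single_le_sum (fun j _ => mul_nonneg (hf j) (pow_nonneg hx j)) (by simp)

theorem coeff_pos_of_roots_neg {g : K[X]} (hg : g.Splits) (hlc : 0 < g.leadingCoeff)
    (hroots : ∀ b ∈ g.roots, b < 0) {j : ℕ} (hj : j ≤ g.natDegree) : 0 < g.coeff j := by
  rw [coeff_eq_esymm_roots_of_splits hg hj, mul_assoc, ← Multiset.esymm_neg]
  refine mul_pos hlc (Multiset.esymm_pos ?_ (by simp [hg.natDegree_eq_card_roots]))
  simp only [Multiset.mem_map]
  rintro _ ⟨b, hb, rfl⟩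
  exact neg_pos.mpr (hroots b hb)

theorem Splits.eval_derivative_nonneg {g : K[X]} (hg : g.Splits) (hlc : 0 ≤ g.leadingCoeff)
    {r : K} (hr : ∀ b ∈ g.roots, b ≤ r) : 0 ≤ eval r (derivative g) := by
  classical
  rw [hg.eval_derivative]
  refine mul_nonneg hlc (Multiset.sum_nonneg fun _ hx => ?_)
  obtain ⟨a, -, rfl⟩ := Multiset.mem_map.mp hx
  refine Multiset.prod_nonneg fun _ hy => ?_
  obtain ⟨b, hb, rfl⟩ := Multiset.mem_map.mp hy
  exact sub_nonneg.mpr (hr b (Multiset.mem_of_mem_erase hb))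

theorem Splits.eval_mul_eval_derivative_derivative_le {f : K[X]} (hf : f.Splits) (r : K) :
    eval r f * eval r (derivative (derivative f)) ≤ eval r (derivative f) ^ 2 := by
  rw [hf.eq_prod_roots]
  generalize f.leadingCoeff = c
  induction f.roots using Multiset.induction_on with
  | empty => simp
  | cons a t ih =>
    have key := sq_eval_derivative_sub_mul_X_sub_C_mul a r (C c * (t.map fun a => X - C a).prod)
    rw [Multiset.map_cons, Multiset.prod_cons, mul_left_comm]
    nlinarith [mul_nonneg (sq_nonneg (r - a)) (sub_nonneg.mpr ih)]

theorem Splits.eval_mul_eval_derivative_derivative_lt {f : K[X]} (hf : f.Splits)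
    (hdeg : f.natDegree ≠ 0) {r : K} (hr : eval r f ≠ 0) :
    eval r f * eval r (derivative (derivative f)) < eval r (derivative f) ^ 2 := by
  obtain ⟨a, ha⟩ := Multiset.exists_mem_of_ne_zero (hf.roots_ne_zero hdeg)
  obtain ⟨t, ht⟩ := Multiset.exists_cons_of_mem ha
  set h := C f.leadingCoeff * (t.map fun a => X - C a).prod
  have hfh : f = (X - C a) * h := by
    conv_lhs => rw [hf.eq_prod_roots, ht, Multiset.map_cons, Multiset.prod_cons]
    ring
  have hh : eval r h ≠ 0 := by
    rw [hfh, eval_mul] at hr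
    exact right_ne_zero_of_mul hr
  have hh_splits : h.Splits :=
    hf.of_dvd (by rintro rfl; simp at hdeg) ⟨X - C a, by rw [hfh, mul_comm]⟩
  have key := sq_eval_derivative_sub_mul_X_sub_C_mul a r h
  rw [← hfh] at key
  nlinarith [sq_pos_of_ne_zero hh,
    mul_nonneg (sq_nonneg (r - a))
      (sub_nonneg.mpr (hh_splits.eval_mul_eval_derivative_derivative_le r))]

end OrderedField

end Polynomial

namespace Multiset

/-- Gårding's cone `Γ_k`; the case `m = 0` is harmless since `esymm s 0 = 1`. -/
def InGammaCone (k : ℕ) (s : Multiset ℝ) : Prop :=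
  ∀ m ≤ k, 0 < s.esymm m

/-- Up to positive factors `∑_{j ≤ k} σ_j(s) X^{k-j}`, so that `s ∈ Γ_k` means that all its
coefficients are positive. -/
noncomputable def gammaPoly (s : Multiset ℝ) (k : ℕ) : ℝ[X] :=
  derivative^[card s - k] (s.map fun a => X + C a).prod

variable {s : Multiset ℝ} {k : ℕ}

theorem InGammaCone.le_card (h : InGammaCone k s) : k ≤ card s := by
  by_contra! hlt
  simpa [esymm, powersetCard_eq_empty _ hlt] using h k le_rfl

theorem coeff_gammaPoly (hk : k ≤ card s) {j : ℕ} (hj : j ≤ k) :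
    (gammaPoly s k).coeff j =
      ((j + (card s - k)).descFactorial (card s - k) : ℝ) * s.esymm (k - j) := by
  rw [gammaPoly, coeff_iterate_derivative, nsmul_eq_mul, prod_X_add_C_coeff _ (by omega)]
  congr 2
  omega

theorem natDegree_gammaPoly (hk : k ≤ card s) : (gammaPoly s k).natDegree = k := by
  refine natDegree_eq_of_le_of_coeff_ne_zero ?_ ?_
  · have := natDegree_iterate_derivative (s.map fun a => X + C a).prod (card s - k)
    rw [natDegree_prod_X_add_C] at this
    rw [gammaPoly]
    omega
  · rw [coeff_gammaPoly hk le_rfl, Nat.sub_self, esymm_zero, mul_one, Nat.cast_ne_zero]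
    exact (Nat.descFactorial_pos.mpr (by omega)).ne'

theorem leadingCoeff_gammaPoly_pos (hk : k ≤ card s) : 0 < (gammaPoly s k).leadingCoeff := by
  rw [leadingCoeff, natDegree_gammaPoly hk, coeff_gammaPoly hk le_rfl, Nat.sub_self, esymm_zero,
    mul_one, Nat.cast_pos]
  exact Nat.descFactorial_pos.mpr (by omega)

theorem splits_gammaPoly (s : Multiset ℝ) (k : ℕ) : (gammaPoly s k).Splits :=
  splits_iterate_derivative (splits_prod_X_add_C s) _

theorem derivative_gammaPoly (hk1 : 1 ≤ k) (hk : k ≤ card s) :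
    derivative (gammaPoly s k) = gammaPoly s (k - 1) := by
  rw [gammaPoly, gammaPoly, ← Function.iterate_succ_apply' derivative]
  congr 1
  omega

theorem gammaPoly_cons (a : ℝ) (s : Multiset ℝ) (hk : 1 ≤ k) :
    gammaPoly (a ::ₘ s) k =
      (X + C a) * gammaPoly s (k - 1) + (card s + 1 - k) • gammaPoly s k := by
  rw [gammaPoly, map_cons, prod_cons, iterate_derivative_X_add_C_mul, card_cons, gammaPoly,
    gammaPoly]
  congr 3 <;> omega

theorem InGammaCone.eval_gammaPoly_pos (h : InGammaCone k s) {x : ℝ} (hx : 0 ≤ x) :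
    0 < eval x (gammaPoly s k) := by
  have hk := h.le_card
  refine eval_pos_of_coeff_nonneg (fun j => ?_) ?_ hx
  · obtain hj | hj := le_or_gt j k
    · rw [coeff_gammaPoly hk hj]
      exact mul_nonneg (Nat.cast_nonneg _) (h _ (by omega)).le
    · exact (coeff_eq_zero_of_natDegree_lt (by rwa [natDegree_gammaPoly hk])).ge
  · rw [coeff_gammaPoly hk (Nat.zero_le k)]
    exact mul_pos (Nat.cast_pos.mpr (Nat.descFactorial_pos.mpr (by omega))) (h _ (by omega))

theorem inGammaCone_of_roots_gammaPoly_neg (hk : k ≤ card s)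
    (hroots : ∀ b ∈ (gammaPoly s k).roots, b < 0) : InGammaCone k s := by
  intro m hm
  have hpos := coeff_pos_of_roots_neg (splits_gammaPoly s k) (leadingCoeff_gammaPoly_pos hk)
    hroots (j := k - m) (by rw [natDegree_gammaPoly hk]; omega)
  rw [coeff_gammaPoly hk (by omega), Nat.sub_sub_self hm] at hpos
  exact pos_of_mul_pos_right hpos (Nat.cast_nonneg _)

theorem InGammaCone.of_cons {a : ℝ} (h : InGammaCone k (a ::ₘ s)) : InGammaCone (k - 1) s := by
  obtain hk | hk := lt_or_ge k 2
  · intro m hm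
    rw [show m = 0 by omega, esymm_zero]
    exact one_pos
  have hks : k ≤ card s + 1 := by simpa using h.le_card
  refine inGammaCone_of_roots_gammaPoly_neg (by omega) fun b hb => ?_
  by_contra! hb0
  obtain ⟨r, hr, hr_max⟩ := exists_max_image id (s := (gammaPoly s (k - 1)).roots)
    (by rintro h0; simp [h0] at hb)
  have hr0 : 0 ≤ r := hb0.trans (hr_max b hb)
  have hgr : eval r (gammaPoly s (k - 1)) = 0 := (mem_roots'.mp hr).2
  have hpos : 0 < ((card s + 1 - k : ℕ) : ℝ) * eval r (gammaPoly s k) := by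
    simpa [gammaPoly_cons a s (by omega : 1 ≤ k), hgr] using h.eval_gammaPoly_pos hr0
  have hk_card : k ≤ card s := by
    by_contra! hlt
    simp [show card s + 1 - k = 0 by omega] at hpos
  have hfr : 0 < eval r (gammaPoly s k) := pos_of_mul_pos_right hpos (Nat.cast_nonneg _)
  have hg'r : 0 ≤ eval r (derivative (gammaPoly s (k - 1))) :=
    (splits_gammaPoly s (k - 1)).eval_derivative_nonneg
      (leadingCoeff_gammaPoly_pos (by omega)).le hr_max
  have hnewton := (splits_gammaPoly s k).eval_mul_eval_derivative_derivative_lt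
    (by rw [natDegree_gammaPoly hk_card]; omega) hfr.ne'
  rw [derivative_gammaPoly (by omega) hk_card, hgr] at hnewton
  nlinarith

theorem InGammaCone.erase (h : InGammaCone k s) {a : ℝ} (ha : a ∈ s) :
    InGammaCone (k - 1) (s.erase a) := by
  rw [← cons_erase ha] at h
  exact h.of_cons

theorem InGammaCone.esymm_erase_le_esymm_erase (h : InGammaCone k s) {a b : ℝ} (ha : a ∈ s)
    (hb : b ∈ s) (hba : b ≤ a) : (s.erase a).esymm (k - 1) ≤ (s.erase b).esymm (k - 1) := by
  obtain rfl | hab := eq_or_ne a b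
  · rfl
  obtain hk | hk := lt_or_ge k 2
  · rw [show k - 1 = 0 by omega, esymm_zero, esymm_zero]
  have hb' : b ∈ s.erase a := (mem_erase_of_ne hab.symm).mpr hb
  have hu := (h.erase ha).erase hb'
  have hsa : s.erase a = b ::ₘ (s.erase a).erase b := (cons_erase hb').symm
  have hsb : s.erase b = a ::ₘ (s.erase a).erase b := by
    rw [erase_comm]
    exact (cons_erase ((mem_erase_of_ne hab).mpr ha)).symm
  rw [hsa, hsb, show k - 1 = k - 1 - 1 + 1 by omega, esymm_cons_succ, esymm_cons_succ]
  gcongr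
  exact (hu _ le_rfl).le

end Multiset

theorem esymmOn_eq_esymm_map_val {n : ℕ} (s : Finset (Fin n)) (κ : Fin n → ℝ) (m : ℕ) :
    esymmOn s κ m = (s.val.map κ).esymm m :=
  (Finset.esymm_map_val κ s m).symm

theorem esymmOn_erase {n : ℕ} (s : Finset (Fin n)) (κ : Fin n → ℝ) {i : Fin n} (hi : i ∈ s)
    (m : ℕ) : esymmOn (s.erase i) κ m = ((s.val.map κ).erase (κ i)).esymm m := by
  rw [esymmOn_eq_esymm_map_val, erase_val, Multiset.map_erase_of_mem _ _ (mem_val.mpr hi)]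

/-- If `κ ∈ Γ_k` is decreasingly ordered with `κ₁ > 0` and `κ_n ≤ -θ κ₁` for
some `θ ∈ (0,1]`, then with `F^{ii} = σ_{k-1}(κ|i)`,
`∑ F^{ii} κ_i² ≥ F^{nn} κ_n² ≥ (θ²/n) κ₁² ∑ F^{ii}`. -/
theorem lower_bound_Fii_kappa_sq (n k : ℕ)
    (hn : 1 ≤ n) (θ : ℝ) (hθ0 : 0 < θ)
    (κ : Fin n → ℝ) (hord : ∀ i j : Fin n, i ≤ j → κ j ≤ κ i)
    (hΓ : ∀ m : ℕ, 1 ≤ m → m ≤ k → 0 < esymm κ m)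
    (hκ1 : 0 < κ ⟨0, by omega⟩)
    (hκn : κ ⟨n - 1, by omega⟩ ≤ -θ * κ ⟨0, by omega⟩) :
    (∑ i, esymmOn (Finset.univ.erase i) κ (k - 1) * κ i ^ 2 ≥
        esymmOn (Finset.univ.erase ⟨n - 1, by omega⟩) κ (k - 1) *
          κ ⟨n - 1, by omega⟩ ^ 2) ∧
      esymmOn (Finset.univ.erase ⟨n - 1, by omega⟩) κ (k - 1) *
          κ ⟨n - 1, by omega⟩ ^ 2 ≥
        θ ^ 2 / n * κ ⟨0, by omega⟩ ^ 2 *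
          ∑ i, esymmOn (Finset.univ.erase i) κ (k - 1) := by
  set last : Fin n := ⟨n - 1, by omega⟩
  set F : Fin n → ℝ := fun i => esymmOn (univ.erase i) κ (k - 1) with hF
  have hcone : (univ.val.map κ).InGammaCone k := fun m hm => by
    obtain rfl | hm0 := Nat.eq_zero_or_pos m
    · simp [Multiset.esymm_zero]
    · simpa [esymm, esymmOn_eq_esymm_map_val] using hΓ m hm0 hm
  have hF_pos (i : Fin n) : 0 < F i := by
    simpa [hF, esymmOn_erase _ _ (mem_univ i)] using
      (hcone.erase (Multiset.mem_map_of_mem κ (mem_univ_val i))) (k - 1) le_rfl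
  have hF_le (i : Fin n) : F i ≤ F last := by
    simp only [hF, esymmOn_erase _ _ (mem_univ _)]
    exact hcone.esymm_erase_le_esymm_erase (Multiset.mem_map_of_mem κ (mem_univ_val i))
      (Multiset.mem_map_of_mem κ (mem_univ_val last)) (hord i last (Nat.le_sub_one_of_lt i.isLt))
  have hκ_sq : θ ^ 2 * κ ⟨0, by omega⟩ ^ 2 ≤ κ last ^ 2 := by
    nlinarith [mul_pos hθ0 hκ1]
  refine ⟨single_le_sum (fun i _ => mul_nonneg (hF_pos i).le (sq_nonneg _)) (mem_univ last), ?_⟩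
  calc θ ^ 2 / n * κ ⟨0, by omega⟩ ^ 2 * ∑ i, F i
      ≤ θ ^ 2 / n * κ ⟨0, by omega⟩ ^ 2 * (n * F last) := by
        gcongr
        simpa using sum_le_card_nsmul univ F (F last) fun i _ => hF_le i
    _ = θ ^ 2 * κ ⟨0, by omega⟩ ^ 2 * F last := by
        field_simp
    _ ≤ F last * κ last ^ 2 := by
        nlinarith [hF_pos last]
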